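/- In a k-meridional coloring of a Gauss diagram D with height function h and k ≥ 2 (so ω(D) > 1), if a strand a_i is not a seed strand and is adjacent to strands a_{i-1} and a_{i+1} which received the same color as a_i on both sides, then h(a_{i+1}) < h(a_i) < h(a_{i-1}) or h(a_{i-1}) < h(a_i) < h(a_{i+1}). -/
import Mathlib


/-- An abstract Gauss diagram: a finite collection of circles, each circle `c`
carrying `heads c` arrowheads which divide it into `heads c` strands (in cyclic
order); each chord has its arrowhead at one of these positions (bijectively),
its arrowtail on some strand, and a sign. -/
structure GaussDiagram where
  circles : ℕ
  heads : Fin circles → ℕ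
  chords : ℕ
  headPos : Fin chords → (c : Fin circles) × Fin (heads c)
  headBij : Function.Bijective headPos
  tail : Fin chords → (c : Fin circles) × Fin (heads c)
  sign : Fin chords → Bool

namespace GaussDiagram

variable (D : GaussDiagram)

/-- A strand: the arc of circle `c` beginning just after arrowhead `i`. -/
abbrev Strand := (c : Fin D.circles) × Fin (D.heads c)

noncomputable def nStrands : ℕ := Nat.card D.Strand

/-- The next strand along the circle (across one arrowhead). -/
def next (s : D.Strand) : D.Strand :=
  ⟨s.1, ⟨(s.2.val + 1) % D.heads s.1, Nat.mod_lt _ (Nat.lt_of_le_of_lt (Nat.zero_le _) s.2.isLt)⟩⟩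

/-- The strand on one side of the arrowhead of chord `p`. -/
def src (p : Fin D.chords) : D.Strand := D.headPos p
/-- The strand on the other side of the arrowhead of chord `p`. -/
def dst (p : Fin D.chords) : D.Strand := D.next (D.src p)

/-- Two strands are adjacent if they are separated by an arrowhead. -/
def Adjacent (s t : D.Strand) : Prop :=
  ∃ p : Fin D.chords, (D.src p = s ∧ D.dst p = t) ∨ (D.src p = t ∧ D.dst p = s)

/-- An overbridge is a strand containing at least one arrowtail. -/
def IsOverbridge (s : D.Strand) : Prop := ∃ p : Fin D.chords, D.tail p = s

/-- The bridge number of the diagram: the number of overbridges. -/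
noncomputable def vb : ℕ := Nat.card {s : D.Strand // D.IsOverbridge s}

/-- Cut-split: some circle has no chords, or two strands adjacent at an
arrowhead coincide. -/
def CutSplit : Prop :=
  (∃ c : Fin D.circles, D.heads c = 0) ∨ ∃ p : Fin D.chords, D.src p = D.dst p

/-- A `k`-meridional coloring of `D`, recorded by its coloring sequence:
`seq` enumerates the strands in the order they are colored, the first `k` being
the seed strands (with the `k` distinct colors `0, …, k-1`), and each later
strand receives its color through a coloring move: there is a chord `p` whose
arrowhead separates it from a previously colored strand of the same color, and
whose arrowtail lies on a previously colored strand. -/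
structure MerColoring (k : ℕ) where
  seq : Fin D.nStrands → D.Strand
  bij : Function.Bijective seq
  col : Fin D.nStrands → Fin k
  seed_col : ∀ (i : Fin D.nStrands) (h : i.val < k), col i = ⟨i.val, h⟩
  move : ∀ i : Fin D.nStrands, k ≤ i.val →
    ∃ (p : Fin D.chords) (l r : Fin D.nStrands), l < i ∧ r < i ∧
      ((D.src p = seq l ∧ D.dst p = seq i) ∨ (D.src p = seq i ∧ D.dst p = seq l)) ∧
      D.tail p = seq r ∧ col i = col l

variable {D}

/-- The position of a strand in the coloring sequence. -/
noncomputable def MerColoring.idx {k : ℕ} (mc : D.MerColoring k) (s : D.Strand) :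
    Fin D.nStrands :=
  (Equiv.ofBijective mc.seq mc.bij).symm s

/-- The height function `h(α_j) = 1/(j+1)` (zero-indexed: `1/(j+2)`). -/
noncomputable def MerColoring.height {k : ℕ} (mc : D.MerColoring k) (s : D.Strand) : ℚ :=
  1 / ((mc.idx s : ℕ) + 2)

/-- The final color of a strand. -/
noncomputable def MerColoring.colorOf {k : ℕ} (mc : D.MerColoring k) (s : D.Strand) : Fin k :=
  mc.col (mc.idx s)

variable (D)

/-- The Wirtinger number: the least `k` for which `D` is `k`-meridionally
colorable. -/
noncomputable def wirt : ℕ := sInf {k | Nonempty (D.MerColoring k)}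

/-- A single coloring move on partial colorings: extend a color across the
arrowhead of a chord whose arrowtail lies on an already colored strand. -/
def ColoringMove {k : ℕ} (f g : D.Strand → Option (Fin k)) : Prop :=
  ∃ (p : Fin D.chords) (ap aq : D.Strand),
    ((D.src p = ap ∧ D.dst p = aq) ∨ (D.src p = aq ∧ D.dst p = ap)) ∧
    (f (D.tail p)).isSome ∧ (f ap).isSome ∧ f aq = none ∧
    g = Function.update f aq (f ap)

/-- A set of strands is connected if any two of its members are joined by a
path of adjacent strands inside the set. -/
def ConnectedStrands (A : Set D.Strand) : Prop :=
  ∀ s ∈ A, ∀ t ∈ A,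
    Relation.ReflTransGen (fun x y => x ∈ A ∧ y ∈ A ∧ D.Adjacent x y) s t

end GaussDiagram

namespace GaussDiagram

variable {D : GaussDiagram}

lemma adjacent_symm' {x y : D.Strand} (h : D.Adjacent x y) : D.Adjacent y x := by
  obtain ⟨p, hp⟩ := h; exact ⟨p, hp.symm⟩

lemma adj_cases' {x y : D.Strand} (h : D.Adjacent x y) : y = D.next x ∨ x = D.next y := by
  obtain ⟨p, hp | hp⟩ := h
  · left; rw [← hp.2, ← hp.1]; rfl
  · right; rw [← hp.2, ← hp.1]; rfl

lemma circle_eq' (hknot : D.circles = 1) (x y : D.Strand) : x.fst = y.fst := by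
  have hx := x.fst.isLt; have hy := y.fst.isLt
  apply Fin.ext; omega

lemma heads_eq' (hknot : D.circles = 1) (x y : D.Strand) :
    D.heads x.fst = D.heads y.fst := by rw [circle_eq' hknot x y]

def posf (s x : D.Strand) : ℕ :=
  (x.2.val + (D.heads s.1 - 1 - s.2.val)) % D.heads s.1

lemma n_pos' (s : D.Strand) : 0 < D.heads s.1 :=
  Nat.lt_of_le_of_lt (Nat.zero_le _) s.2.isLt

lemma posf_lt (s x : D.Strand) : posf s x < D.heads s.1 :=
  Nat.mod_lt _ (n_pos' s)

lemma posf_inj (hknot : D.circles = 1) {s x y : D.Strand}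
    (h : posf s x = posf s y) : x = y := by
  have hx : x.2.val < D.heads s.1 := lt_of_lt_of_eq x.2.isLt (heads_eq' hknot x s)
  have hy : y.2.val < D.heads s.1 := lt_of_lt_of_eq y.2.isLt (heads_eq' hknot y s)
  have hmod : x.2.val ≡ y.2.val [MOD D.heads s.1] :=
    Nat.ModEq.add_right_cancel' _ (h : _ % _ = _ % _)
  have hval : x.2.val = y.2.val := by
    unfold Nat.ModEq at hmod
    rwa [Nat.mod_eq_of_lt hx, Nat.mod_eq_of_lt hy] at hmod
  obtain ⟨xc, xi⟩ := x; obtain ⟨yc, yi⟩ := y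
  have hc : xc = yc := circle_eq' hknot ⟨xc, xi⟩ ⟨yc, yi⟩
  subst hc
  have : xi = yi := Fin.ext hval
  rw [this]

lemma posf_next (hknot : D.circles = 1) (s x : D.Strand) :
    posf s (D.next x) = (posf s x + 1) % D.heads s.1 := by
  obtain ⟨xc, xi⟩ := x
  have hc : xc = s.fst := circle_eq' hknot ⟨xc, xi⟩ s
  subst hc
  show ((xi.val + 1) % D.heads s.fst + (D.heads s.1 - 1 - s.2.val)) % D.heads s.1
      = ((xi.val + (D.heads s.1 - 1 - s.2.val)) % D.heads s.1 + 1) % D.heads s.1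
  rw [Nat.mod_add_mod, Nat.mod_add_mod]
  congr 1
  omega

lemma posf_self (s : D.Strand) : posf s s = D.heads s.1 - 1 := by
  have h1 := s.2.isLt
  have h2 : s.2.val + (D.heads s.1 - 1 - s.2.val) = D.heads s.1 - 1 := by omega
  unfold posf
  rw [h2, Nat.mod_eq_of_lt (show D.heads s.1 - 1 < D.heads s.1 by omega)]

attribute [irreducible] posf

lemma next_inj' (hknot : D.circles = 1) {x y : D.Strand}
    (h : D.next x = D.next y) : x = y := by
  apply posf_inj hknot (s := x)
  have h1 := congrArg (posf x) h
  rw [posf_next hknot, posf_next hknot] at h1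
  have h2 : posf x x ≡ posf x y [MOD D.heads x.1] :=
    Nat.ModEq.add_right_cancel' 1 (h1 : _ % _ = _ % _)
  have h3 : posf x x % D.heads x.1 = posf x y % D.heads x.1 := h2
  rwa [Nat.mod_eq_of_lt (posf_lt x x), Nat.mod_eq_of_lt (posf_lt x y)] at h3

section Coloring

variable {k : ℕ}

lemma idx_seq (mc : D.MerColoring k) (j : Fin D.nStrands) :
    mc.idx (mc.seq j) = j :=
  (Equiv.ofBijective mc.seq mc.bij).symm_apply_apply j

lemma seq_idx (mc : D.MerColoring k) (x : D.Strand) :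
    mc.seq (mc.idx x) = x :=
  (Equiv.ofBijective mc.seq mc.bij).apply_symm_apply x

lemma idx_inj (mc : D.MerColoring k) {x y : D.Strand}
    (h : mc.idx x = mc.idx y) : x = y := by
  rw [← seq_idx mc x, ← seq_idx mc y, h]

lemma colorOf_seq (mc : D.MerColoring k) (j : Fin D.nStrands) :
    mc.colorOf (mc.seq j) = mc.col j := by
  unfold MerColoring.colorOf; rw [idx_seq]

/-- The relation of being same-colored, colored before stage `b`, and adjacent. -/
def Wrel (mc : D.MerColoring k) (c : Fin k) (b : Fin D.nStrands) :
    D.Strand → D.Strand → Prop :=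
  fun x y => (mc.colorOf x = c ∧ mc.idx x < b) ∧
    (mc.colorOf y = c ∧ mc.idx y < b) ∧ D.Adjacent x y

lemma Wrel_symm (mc : D.MerColoring k) (c : Fin k) (b : Fin D.nStrands) :
    Symmetric (Wrel mc c b) := fun _ _ h => ⟨h.2.1, h.1, adjacent_symm' h.2.2⟩

lemma rtg_symm {α : Type*} {r : α → α → Prop} (hs : Symmetric r) {a b : α}
    (h : Relation.ReflTransGen r a b) : Relation.ReflTransGen r b a := by
  induction h with
  | refl => exact .refl
  | tail _ hW ih => exact Relation.ReflTransGen.head (hs hW) ih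

lemma walk_prop {mc : D.MerColoring k} {c : Fin k} {b : Fin D.nStrands}
    {x y : D.Strand} (h : Relation.ReflTransGen (Wrel mc c b) x y)
    (hx : mc.colorOf x = c ∧ mc.idx x < b) :
    mc.colorOf y = c ∧ mc.idx y < b := by
  induction h with
  | refl => exact hx
  | tail _ hW _ => exact hW.2.1

lemma descend (mc : D.MerColoring k) (c : Fin k) (b : Fin D.nStrands)
    (hkN : k ≤ D.nStrands) :
    ∀ i : Fin D.nStrands, mc.col i = c → i < b →
      Relation.ReflTransGen (Wrel mc c b) (mc.seq i)
        (mc.seq ⟨c.val, lt_of_lt_of_le c.isLt hkN⟩) := by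
  suffices H : ∀ m : ℕ, ∀ i : Fin D.nStrands, i.val < m → mc.col i = c → i < b →
      Relation.ReflTransGen (Wrel mc c b) (mc.seq i)
        (mc.seq ⟨c.val, lt_of_lt_of_le c.isLt hkN⟩) from
    fun i hc hb => H (i.val + 1) i (Nat.lt_succ_self _) hc hb
  intro m
  induction m with
  | zero => intro i him _ _; exact absurd him (Nat.not_lt_zero _)
  | succ m IH =>
    intro i him hci hib
    by_cases hik : i.val < k
    · have hv : i.val = c.val := by
        have h1 := mc.seed_col i hik
        rw [h1] at hci
        exact (congrArg Fin.val hci)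
      have heq : i = ⟨c.val, lt_of_lt_of_le c.isLt hkN⟩ := Fin.ext hv
      rw [heq]
    · push_neg at hik
      obtain ⟨p, l, r, hl, hr, hadj, htail, hcol⟩ := mc.move i hik
      have hcl : mc.col l = c := by rw [← hcol]; exact hci
      have hadjS : D.Adjacent (mc.seq i) (mc.seq l) := ⟨p, hadj.symm⟩
      have hl' : l.val < i.val := hl
      have hWil : Wrel mc c b (mc.seq i) (mc.seq l) := by
        refine ⟨⟨?_, ?_⟩, ⟨?_, ?_⟩, hadjS⟩
        · rw [colorOf_seq]; exact hci
        · rw [idx_seq]; exact hib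
        · rw [colorOf_seq]; exact hcl
        · rw [idx_seq]; exact lt_trans hl hib
      exact Relation.ReflTransGen.head hWil
        (IH l (by omega) hcl (lt_trans hl hib))

lemma ivt_walk {α : Type*} (r : α → α → Prop) (g : α → ℕ)
    (hstep : ∀ x y, r x y → g y = g x + 1 ∨ g x = g y + 1) (x y : α)
    (h : Relation.ReflTransGen r x y) :
    ∀ v, g x ≤ v → v ≤ g y → ∃ z, Relation.ReflTransGen r x z ∧ g z = v := by
  induction h using Relation.ReflTransGen.head_induction_on with
  | refl =>
    intro v h1 h2
    exact ⟨y, .refl, le_antisymm h1 h2⟩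
  | head hr hrest ih =>
    intro v h1 h2
    rcases eq_or_lt_of_le h1 with he | hlt
    · exact ⟨_, .refl, he⟩
    · rcases hstep _ _ hr with h3 | h3
      · obtain ⟨z, hz, hgz⟩ := ih v (by omega) h2
        exact ⟨z, .head hr hz, hgz⟩
      · obtain ⟨z, hz, hgz⟩ := ih v (by omega) h2
        exact ⟨z, .head hr hz, hgz⟩

lemma no_both_below (hknot : D.circles = 1) (mc : D.MerColoring k)
    (hk : 2 ≤ k) (s t u : D.Strand)
    (hts : t = D.next s) (hsu : s = D.next u) (htu : t ≠ u)
    (hnotseed : k ≤ (mc.idx s).val)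
    (hct : mc.colorOf t = mc.colorOf s) (hcu : mc.colorOf u = mc.colorOf s)
    (hlt : mc.idx t < mc.idx s) (hlu : mc.idx u < mc.idx s) : False := by
  set n := D.heads s.1 with hn
  set c := mc.colorOf s with hc
  set b := mc.idx s with hb
  have hnpos : 0 < n := n_pos' s
  have hn2 : 2 ≤ n := by
    have h1 : posf s t ≠ posf s u := fun h => htu (posf_inj hknot h)
    have h2 := posf_lt s t
    have h3 := posf_lt s u
    omega
  have hkN : k ≤ D.nStrands := le_of_lt (lt_of_le_of_lt hnotseed b.isLt)
  have hfs : posf s s = n - 1 := posf_self s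
  have hne : ∀ x : D.Strand, x ≠ s → posf s x ≤ n - 2 := by
    intro x hx
    have h1 : posf s x < n := posf_lt s x
    have h2 : posf s x ≠ n - 1 := fun h => hx (posf_inj hknot (h.trans hfs.symm))
    omega
  have hstep : ∀ x y, Wrel mc c b x y →
      posf s y = posf s x + 1 ∨ posf s x = posf s y + 1 := by
    rintro x y ⟨⟨_, hxb⟩, ⟨_, hyb⟩, hadj⟩
    have hxs : x ≠ s := by intro h; rw [h] at hxb; exact lt_irrefl _ hxb
    have hys : y ≠ s := by intro h; rw [h] at hyb; exact lt_irrefl _ hyb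
    have hfx := hne x hxs
    have hfy := hne y hys
    rcases adj_cases' hadj with h | h
    · left
      have h1 := posf_next hknot s x
      rw [← h] at h1
      rwa [Nat.mod_eq_of_lt (show posf s x + 1 < D.heads s.1 by omega)] at h1
    · right
      have h1 := posf_next hknot s y
      rw [← h] at h1
      rwa [Nat.mod_eq_of_lt (show posf s y + 1 < D.heads s.1 by omega)] at h1
  -- the two walks down to the seed of color c
  have hwt := descend mc c b hkN (mc.idx t) hct hlt
  rw [seq_idx] at hwt
  have hwu := descend mc c b hkN (mc.idx u) hcu hlu
  rw [seq_idx] at hwu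
  have hwalk : Relation.ReflTransGen (Wrel mc c b) t u :=
    hwt.trans (rtg_symm (Wrel_symm mc c b) hwu)
  -- endpoint position values
  have hft : posf s t = 0 := by
    rw [hts, posf_next hknot, hfs]
    have h1 : n - 1 + 1 = n := by omega
    rw [h1, Nat.mod_self]
  have hfu0 : n - 1 = (posf s u + 1) % n := by
    have h1 := congrArg (posf s) hsu
    rwa [posf_next hknot, hfs] at h1
  have hulty : posf s u < n := posf_lt s u
  by_cases hcase : posf s u + 1 < n
  · have hfu : posf s u = n - 2 := by
      rw [Nat.mod_eq_of_lt hcase] at hfu0; omega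
    -- every strand colored before s in color c; in particular the two seeds
    have hvisit : ∀ j : Fin D.nStrands, j.val < k → mc.colorOf (mc.seq j) = c := by
      intro j hj
      have hnej : mc.seq j ≠ s := by
        intro h
        have h1 := idx_seq mc j
        rw [h] at h1
        have h2 : (mc.idx s).val = j.val := congrArg Fin.val h1
        omega
      have hfj : posf s (mc.seq j) ≤ n - 2 := hne _ hnej
      obtain ⟨z, hz, hfz⟩ := ivt_walk (Wrel mc c b) (posf s) hstep t u hwalk
        (posf s (mc.seq j)) (by omega) (by omega)
      have hz2 : z = mc.seq j := posf_inj hknot hfz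
      have h3 := walk_prop hz ⟨hct, hlt⟩
      rw [← hz2]; exact h3.1
    have h0 := hvisit ⟨0, by omega⟩ (show (0 : ℕ) < k by omega)
    have h1 := hvisit ⟨1, by omega⟩ (show (1 : ℕ) < k by omega)
    rw [colorOf_seq, mc.seed_col _ (show (0 : ℕ) < k by omega)] at h0
    rw [colorOf_seq, mc.seed_col _ (show (1 : ℕ) < k by omega)] at h1
    have h2 : (0 : ℕ) = 1 := congrArg Fin.val (h0.trans h1.symm)
    exact absurd h2 (by omega)
  · -- n = 1, impossible since t ≠ u
    have h1 : posf s u + 1 = n := by omega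
    rw [h1, Nat.mod_self] at hfu0
    have hn1 : n = 1 := by omega
    have h2 : posf s t = posf s u := by
      have := posf_lt s t
      omega
    exact htu (posf_inj hknot h2)

lemma height_lt' (mc : D.MerColoring k) {x y : D.Strand}
    (h : mc.idx x < mc.idx y) : mc.height y < mc.height x := by
  unfold MerColoring.height
  apply one_div_lt_one_div_of_lt
  · positivity
  · have h1 : (mc.idx x).val < (mc.idx y).val := h
    have := Nat.add_lt_add_right h1 2
    exact_mod_cast this

end Coloring

end GaussDiagram


open GaussDiagram in
/-- In a `k`-meridional coloring with `k ≥ 2` (so `ω(D) > 1`) of a Gauss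
diagram of a virtual knot, if a non-seed strand `s` is adjacent to strands `t`
and `u` on its two sides, both of which received the same color as `s`, then
the heights satisfy `h(u) < h(s) < h(t)` or `h(t) < h(s) < h(u)`. -/
theorem heights_monotone_at_interior_strand (D : GaussDiagram)
    (hknot : D.circles = 1) (k : ℕ) (hk : 2 ≤ k) (homega : 1 < D.wirt)
    (mc : D.MerColoring k) (s t u : D.Strand)
    (hnotseed : k ≤ (mc.idx s).val) (htu : t ≠ u)
    (hat : D.Adjacent s t) (hau : D.Adjacent s u)
    (hct : mc.colorOf t = mc.colorOf s) (hcu : mc.colorOf u = mc.colorOf s) :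
    (mc.height u < mc.height s ∧ mc.height s < mc.height t) ∨
    (mc.height t < mc.height s ∧ mc.height s < mc.height u) := by
  obtain ⟨p, l, r, hl, hr, hadj, htail, hcol⟩ := mc.move (mc.idx s) hnotseed
  rw [seq_idx mc s] at hadj
  have hl_cases : mc.seq l = D.next s ∨ s = D.next (mc.seq l) := by
    rcases hadj with ⟨ha1, ha2⟩ | ⟨ha1, ha2⟩
    · right; rw [← ha2, ← ha1]; rfl
    · left; rw [← ha2, ← ha1]; rfl
  have hll : mc.idx (mc.seq l) < mc.idx s := by rw [idx_seq]; exact hl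
  rcases adj_cases' hat with h1 | h1 <;> rcases adj_cases' hau with h2 | h2
  · -- t = next s, u = next s
    exact absurd (h1.trans h2.symm) htu
  · -- t = next s, s = next u : main orientation
    have hus' : u ≠ s := by
      intro h
      have hss : s = D.next s := h ▸ h2
      have hts : t = s := h1.trans hss.symm
      exact htu (hts.trans h.symm)
    have hts' : t ≠ s := by
      intro h
      have hss : s = D.next s := h ▸ h1
      have hus : u = s := next_inj' hknot (h2.symm.trans hss)
      exact htu (h.trans hus.symm)
    rcases hl_cases with hcase | hcase
    · have hleq : mc.seq l = t := hcase.trans h1.symm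
      have hlt : mc.idx t < mc.idx s := hleq ▸ hll
      by_cases hcmp : mc.idx u < mc.idx s
      · exact (no_both_below hknot mc hk s t u h1 h2 htu hnotseed hct hcu hlt
          hcmp).elim
      · have hne : mc.idx s ≠ mc.idx u := fun h => hus' (idx_inj mc h).symm
        have hgt : mc.idx s < mc.idx u := lt_of_le_of_ne (not_lt.mp hcmp) hne
        exact Or.inl ⟨height_lt' mc hgt, height_lt' mc hlt⟩
    · have hleq : mc.seq l = u := next_inj' hknot (hcase.symm.trans h2)
      have hlu : mc.idx u < mc.idx s := hleq ▸ hll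
      by_cases hcmp : mc.idx t < mc.idx s
      · exact (no_both_below hknot mc hk s t u h1 h2 htu hnotseed hct hcu hcmp
          hlu).elim
      · have hne : mc.idx s ≠ mc.idx t := fun h => hts' (idx_inj mc h).symm
        have hgt : mc.idx s < mc.idx t := lt_of_le_of_ne (not_lt.mp hcmp) hne
        exact Or.inr ⟨height_lt' mc hgt, height_lt' mc hlu⟩
  · -- s = next t, u = next s : mirrored orientation
    have hts' : t ≠ s := by
      intro h
      have hss : s = D.next s := h ▸ h1
      have hus : u = s := h2.trans hss.symm
      exact htu (h.trans hus.symm)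
    have hus' : u ≠ s := by
      intro h
      have hss : s = D.next s := h ▸ h2
      have hts : t = s := next_inj' hknot (h1.symm.trans hss)
      exact htu (hts.trans h.symm)
    rcases hl_cases with hcase | hcase
    · have hleq : mc.seq l = u := hcase.trans h2.symm
      have hlu : mc.idx u < mc.idx s := hleq ▸ hll
      by_cases hcmp : mc.idx t < mc.idx s
      · exact (no_both_below hknot mc hk s u t h2 h1 (Ne.symm htu) hnotseed hcu
          hct hlu hcmp).elim
      · have hne : mc.idx s ≠ mc.idx t := fun h => hts' (idx_inj mc h).symm
        have hgt : mc.idx s < mc.idx t := lt_of_le_of_ne (not_lt.mp hcmp) hne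
        exact Or.inr ⟨height_lt' mc hgt, height_lt' mc hlu⟩
    · have hleq : mc.seq l = t := next_inj' hknot (hcase.symm.trans h1)
      have hlt : mc.idx t < mc.idx s := hleq ▸ hll
      by_cases hcmp : mc.idx u < mc.idx s
      · exact (no_both_below hknot mc hk s u t h2 h1 (Ne.symm htu) hnotseed hcu
          hct hcmp hlt).elim
      · have hne : mc.idx s ≠ mc.idx u := fun h => hus' (idx_inj mc h).symm
        have hgt : mc.idx s < mc.idx u := lt_of_le_of_ne (not_lt.mp hcmp) hne
        exact Or.inl ⟨height_lt' mc hgt, height_lt' mc hlt⟩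
  · -- s = next t, s = next u
    exact absurd (next_inj' hknot (h1.symm.trans h2)) htu
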